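/- Let A ∈ ℝ^{M×r}, R ∈ ℝ^{M×r'}, b ∈ ℝ^M, with r ≤ r' ≤ M. Let [A | b] = QT be a QR factorization where Q ∈ ℝ^{M×r_Q} has orthonormal columns (so A = Q T_A and b = Q T_b), and assume R^T Q has full column rank (so (R^T Q)^T(R^T Q) is invertible). Define Θ = Q ((R^T Q)^T(R^T Q))^{-1} (R^T Q)^T. Then Θ R^T A = A and Θ R^T b = b, and the spectral norm of Θ equals 1/σ_min(R^T Q). -/

import Mathlib

open Matrix

/-!
`Θ = Q P` with `P = (BᵀB)⁻¹Bᵀ` the pseudo-inverse of `B = RᵀQ`. Since `P B = 1`, `Θ Rᵀ Q = Q`,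
and `Θ` reproduces everything in the range of `Q`, in particular `A` and `b`.
As `Q` is an isometry, `‖Θ‖ = ‖P‖`. For `z = P x` the normal equations `BᵀB z = Bᵀx` give
`‖B z‖² = ⟨B z, x⟩ ≤ ‖B z‖ ‖x‖`, so `σ_min(B) ‖z‖ ≤ ‖B z‖ ≤ ‖x‖` and `‖P‖ ≤ 1 / σ_min(B)`; equality is
attained at `x = B y / σ_min(B)` for a unit vector `y` realising `σ_min(B)`.
-/

noncomputable def enorm₂ {n : ℕ} (v : Fin n → ℝ) : ℝ :=
  ‖(WithLp.equiv 2 (Fin n → ℝ)).symm v‖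

noncomputable def sMax {m n : ℕ} (A : Matrix (Fin m) (Fin n) ℝ) : ℝ :=
  ⨆ x : {x : Fin n → ℝ // enorm₂ x = 1}, enorm₂ (A.mulVec x.1)

noncomputable def sMin {m n : ℕ} (A : Matrix (Fin m) (Fin n) ℝ) : ℝ :=
  ⨅ x : {x : Fin n → ℝ // enorm₂ x = 1}, enorm₂ (A.mulVec x.1)

section enorm₂

variable {n : ℕ}

lemma enorm₂_eq_norm_toLp (v : Fin n → ℝ) : enorm₂ v = ‖WithLp.toLp 2 v‖ := rfl

lemma enorm₂_nonneg (v : Fin n → ℝ) : 0 ≤ enorm₂ v := norm_nonneg _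

lemma enorm₂_eq_zero {v : Fin n → ℝ} : enorm₂ v = 0 ↔ v = 0 := by
  simp [enorm₂_eq_norm_toLp]

lemma enorm₂_smul (c : ℝ) (v : Fin n → ℝ) : enorm₂ (c • v) = |c| * enorm₂ v := by
  rw [enorm₂_eq_norm_toLp, WithLp.toLp_smul, norm_smul, Real.norm_eq_abs, enorm₂_eq_norm_toLp]

lemma enorm₂_sq (v : Fin n → ℝ) : enorm₂ v ^ 2 = v ⬝ᵥ v := by
  rw [enorm₂_eq_norm_toLp, ← real_inner_self_eq_norm_sq, EuclideanSpace.inner_eq_star_dotProduct]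
  simp

lemma dotProduct_le_enorm₂_mul_enorm₂ (v w : Fin n → ℝ) : v ⬝ᵥ w ≤ enorm₂ v * enorm₂ w := by
  have h := real_inner_le_norm (WithLp.toLp 2 w) (WithLp.toLp 2 v)
  rw [EuclideanSpace.inner_eq_star_dotProduct, mul_comm] at h
  simpa [enorm₂_eq_norm_toLp] using h

lemma continuous_enorm₂ : Continuous (enorm₂ : (Fin n → ℝ) → ℝ) :=
  continuous_norm.comp (PiLp.continuous_toLp 2 _)

lemma isCompact_setOf_enorm₂_eq_one : IsCompact {v : Fin n → ℝ | enorm₂ v = 1} := by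
  convert (isCompact_sphere (0 : EuclideanSpace ℝ (Fin n)) 1).image (PiLp.continuous_ofLp 2 _)
  ext v
  constructor
  · intro hv
    exact ⟨WithLp.toLp 2 v, by simpa [enorm₂_eq_norm_toLp] using hv, rfl⟩
  · rintro ⟨x, hx, rfl⟩
    simpa [enorm₂_eq_norm_toLp] using hx

end enorm₂

lemma mulVec_dotProduct_mulVec {m n : ℕ} (B : Matrix (Fin m) (Fin n) ℝ) (v w : Fin n → ℝ) :
    (B *ᵥ v) ⬝ᵥ (B *ᵥ w) = v ⬝ᵥ ((Bᵀ * B) *ᵥ w) := by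
  rw [dotProduct_mulVec, dotProduct_mulVec, ← vecMul_transpose, vecMul_vecMul]

lemma enorm₂_mulVec_of_transpose_mul_self_eq_one {m n : ℕ} {Q : Matrix (Fin m) (Fin n) ℝ}
    (hQ : Qᵀ * Q = 1) (v : Fin n → ℝ) : enorm₂ (Q *ᵥ v) = enorm₂ v := by
  rw [← sq_eq_sq₀ (enorm₂_nonneg _) (enorm₂_nonneg _), enorm₂_sq, enorm₂_sq,
    mulVec_dotProduct_mulVec, hQ, one_mulVec]

section sMinMax

variable {m n : ℕ}

lemma sMin_le_enorm₂_mulVec (B : Matrix (Fin m) (Fin n) ℝ) {v : Fin n → ℝ} (hv : enorm₂ v = 1) :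
    sMin B ≤ enorm₂ (B *ᵥ v) :=
  ciInf_le ⟨0, by rintro _ ⟨x, rfl⟩; exact enorm₂_nonneg _⟩ (⟨v, hv⟩ : {x // enorm₂ x = 1})

lemma sMin_mul_enorm₂_le (B : Matrix (Fin m) (Fin n) ℝ) (z : Fin n → ℝ) :
    sMin B * enorm₂ z ≤ enorm₂ (B *ᵥ z) := by
  rcases eq_or_ne z 0 with rfl | hz
  · simp [enorm₂_eq_zero.2 rfl]
  have hz' : 0 < enorm₂ z := (enorm₂_nonneg z).lt_of_ne' (mt enorm₂_eq_zero.1 hz)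
  have hunit : enorm₂ ((enorm₂ z)⁻¹ • z) = 1 := by
    rw [enorm₂_smul, abs_of_pos (inv_pos.2 hz'), inv_mul_cancel₀ hz'.ne']
  have h := sMin_le_enorm₂_mulVec B hunit
  rw [mulVec_smul, enorm₂_smul, abs_of_pos (inv_pos.2 hz'), le_inv_mul_iff₀ hz'] at h
  linarith

lemma nonempty_of_sMin_ne_zero {B : Matrix (Fin m) (Fin n) ℝ} (hB : sMin B ≠ 0) :
    Nonempty {v : Fin n → ℝ // enorm₂ v = 1} := by
  by_contra h
  rw [not_nonempty_iff] at h
  exact hB (Real.iInf_of_isEmpty _)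

lemma exists_enorm₂_mulVec_eq_sMin (B : Matrix (Fin m) (Fin n) ℝ)
    [Nonempty {v : Fin n → ℝ // enorm₂ v = 1}] :
    ∃ y : Fin n → ℝ, enorm₂ y = 1 ∧ enorm₂ (B *ᵥ y) = sMin B := by
  obtain ⟨v, hv⟩ : Nonempty {v : Fin n → ℝ // enorm₂ v = 1} := inferInstance
  have hcont : Continuous fun v : Fin n → ℝ => enorm₂ (B *ᵥ v) :=
    continuous_enorm₂.comp (Continuous.matrix_mulVec continuous_const continuous_id)
  obtain ⟨y, hy, hmin⟩ :=
    isCompact_setOf_enorm₂_eq_one.exists_isMinOn ⟨v, hv⟩ hcont.continuousOn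
  exact ⟨y, hy, le_antisymm (le_ciInf fun x => hmin x.2) (sMin_le_enorm₂_mulVec B hy)⟩

lemma sMax_eq_of_forall_le_of_eq {A : Matrix (Fin m) (Fin n) ℝ} {c : ℝ}
    (hle : ∀ v, enorm₂ v = 1 → enorm₂ (A *ᵥ v) ≤ c)
    {v₀ : Fin n → ℝ} (hv₀ : enorm₂ v₀ = 1) (hc : enorm₂ (A *ᵥ v₀) = c) : sMax A = c := by
  have : Nonempty {v : Fin n → ℝ // enorm₂ v = 1} := ⟨⟨v₀, hv₀⟩⟩
  refine le_antisymm (ciSup_le fun v => hle v.1 v.2) (hc ▸ ?_)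
  exact le_ciSup ⟨c, by rintro _ ⟨v, rfl⟩; exact hle v.1 v.2⟩ (⟨v₀, hv₀⟩ : {v // enorm₂ v = 1})

lemma sMax_mul_of_transpose_mul_self_eq_one {p : ℕ} {Q : Matrix (Fin p) (Fin m) ℝ}
    (hQ : Qᵀ * Q = 1) (A : Matrix (Fin m) (Fin n) ℝ) : sMax (Q * A) = sMax A := by
  simp only [sMax, ← mulVec_mulVec, enorm₂_mulVec_of_transpose_mul_self_eq_one hQ]

end sMinMax

section PseudoInverse

variable {m n : ℕ} (B : Matrix (Fin m) (Fin n) ℝ) (hB : IsUnit (Bᵀ * B).det)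
include hB

lemma pinv_mul_self : (Bᵀ * B)⁻¹ * Bᵀ * B = 1 := by
  rw [Matrix.mul_assoc, nonsing_inv_mul _ hB]

lemma enorm₂_mulVec_pinv_mulVec_le (x : Fin m → ℝ) :
    enorm₂ (B *ᵥ (((Bᵀ * B)⁻¹ * Bᵀ) *ᵥ x)) ≤ enorm₂ x := by
  set z := ((Bᵀ * B)⁻¹ * Bᵀ) *ᵥ x
  have hnormal : (Bᵀ * B) *ᵥ z = Bᵀ *ᵥ x := by
    rw [mulVec_mulVec, ← Matrix.mul_assoc, mul_nonsing_inv _ hB, Matrix.one_mul]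
  have hsq : enorm₂ (B *ᵥ z) ^ 2 ≤ enorm₂ (B *ᵥ z) * enorm₂ x := by
    calc enorm₂ (B *ᵥ z) ^ 2 = z ⬝ᵥ (Bᵀ *ᵥ x) := by
          rw [enorm₂_sq, mulVec_dotProduct_mulVec, hnormal]
      _ = (B *ᵥ z) ⬝ᵥ x := by rw [dotProduct_mulVec, vecMul_transpose]
      _ ≤ enorm₂ (B *ᵥ z) * enorm₂ x := dotProduct_le_enorm₂_mul_enorm₂ _ _
  nlinarith [enorm₂_nonneg (B *ᵥ z), enorm₂_nonneg x]

lemma sMax_pinv (hB₀ : 0 < sMin B) : sMax ((Bᵀ * B)⁻¹ * Bᵀ) = 1 / sMin B := by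
  have := nonempty_of_sMin_ne_zero hB₀.ne'
  obtain ⟨y, hy, hBy⟩ := exists_enorm₂_mulVec_eq_sMin B
  refine sMax_eq_of_forall_le_of_eq (fun x hx => ?_) (v₀ := (sMin B)⁻¹ • (B *ᵥ y)) ?_ ?_
  · rw [le_div_iff₀ hB₀, mul_comm, ← hx]
    exact (sMin_mul_enorm₂_le B _).trans (enorm₂_mulVec_pinv_mulVec_le B hB x)
  · rw [enorm₂_smul, hBy, abs_of_pos (inv_pos.2 hB₀), inv_mul_cancel₀ hB₀.ne']
  · rw [mulVec_smul, mulVec_mulVec, pinv_mul_self B hB, one_mulVec, enorm₂_smul, hy,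
      abs_of_pos (inv_pos.2 hB₀), mul_one, one_div]

end PseudoInverse

theorem stmt_8_general {M r r' rQ : ℕ}
    (A : Matrix (Fin M) (Fin r) ℝ) (R : Matrix (Fin M) (Fin r')  ℝ)
    (b : Fin M → ℝ)
    (Q : Matrix (Fin M) (Fin rQ) ℝ) (TA : Matrix (Fin rQ) (Fin r) ℝ) (Tb : Fin rQ → ℝ)
    (hQ : Qᵀ * Q = 1) (hA : A = Q * TA) (hb : b = Q.mulVec Tb)
    (hfull : 0 < sMin (Rᵀ * Q))
    (hInv : IsUnit ((Rᵀ * Q)ᵀ * (Rᵀ * Q)).det) :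
    (Q * ((Rᵀ * Q)ᵀ * (Rᵀ * Q))⁻¹ * (Rᵀ * Q)ᵀ) * (Rᵀ * A) = A ∧
    (Q * ((Rᵀ * Q)ᵀ * (Rᵀ * Q))⁻¹ * (Rᵀ * Q)ᵀ).mulVec (Rᵀ.mulVec b) = b ∧
    sMax (Q * ((Rᵀ * Q)ᵀ * (Rᵀ * Q))⁻¹ * (Rᵀ * Q)ᵀ) = 1 / sMin (Rᵀ * Q) := by
  have hΘ : Q * ((Rᵀ * Q)ᵀ * (Rᵀ * Q))⁻¹ * (Rᵀ * Q)ᵀ * (Rᵀ * Q) = Q := by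
    rw [Matrix.mul_assoc Q, Matrix.mul_assoc Q, pinv_mul_self _ hInv, Matrix.mul_one]
  refine ⟨?_, ?_, ?_⟩
  · rw [hA, ← Matrix.mul_assoc Rᵀ, ← Matrix.mul_assoc, hΘ]
  · rw [hb, mulVec_mulVec, mulVec_mulVec, Matrix.mul_assoc _ Rᵀ, hΘ]
  · rw [Matrix.mul_assoc Q, sMax_mul_of_transpose_mul_self_eq_one hQ, sMax_pinv _ hInv hfull]

theorem stmt_8 {M r r' rQ : ℕ} (hr : r ≤ r') (hr' : r' ≤ M)
    (A : Matrix (Fin M) (Fin r) ℝ) (R : Matrix (Fin M) (Fin r')  ℝ)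
    (b : Fin M → ℝ)
    (Q : Matrix (Fin M) (Fin rQ) ℝ) (TA : Matrix (Fin rQ) (Fin r) ℝ) (Tb : Fin rQ → ℝ)
    (hQ : Qᵀ * Q = 1) (hA : A = Q * TA) (hb : b = Q.mulVec Tb)
    (hfull : 0 < sMin (Rᵀ * Q))
    (hInv : IsUnit ((Rᵀ * Q)ᵀ * (Rᵀ * Q)).det) :
    (Q * ((Rᵀ * Q)ᵀ * (Rᵀ * Q))⁻¹ * (Rᵀ * Q)ᵀ) * (Rᵀ * A) = A ∧
    (Q * ((Rᵀ * Q)ᵀ * (Rᵀ * Q))⁻¹ * (Rᵀ * Q)ᵀ).mulVec (Rᵀ.mulVec b) = b ∧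
    sMax (Q * ((Rᵀ * Q)ᵀ * (Rᵀ * Q))⁻¹ * (Rᵀ * Q)ᵀ) = 1 / sMin (Rᵀ * Q) :=
  stmt_8_general A R b Q TA Tb hQ hA hb hfull hInv
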